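/- arXiv:1203.2660 — 2 statements merged into one kernel-verified Lean document; each statement's English description precedes it below -/
import Mathlib

section
/- Let m ≥ 2 be an integer, and let D be a Hadamard design with parameters (4m−1, 2m−1, m−1), i.e., a symmetric 2-design with exactly 4m−1 blocks, each a (2m−1)-element subset of a (4m−1)-element point set, such that every pair of distinct points lies in exactly m−1 blocks. Then the set of blocks of D is a resolving set for the Odd graph O_{2m} = K(4m−1, 2m−1). -/
/-- The Johnson graph `J(n,k)`: vertices are the `k`-element subsets of `{1,...,n}`,
two vertices adjacent iff their intersection has `k-1` elements. -/
def johnsonGraph (n k : ℕ) : SimpleGraph {s : Finset (Fin n) // s.card = k} where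
  Adj U W := U ≠ W ∧ (U.1 ∩ W.1).card = k - 1
  symm := by
    constructor
    intro U W h
    exact ⟨h.1.symm, by rw [Finset.inter_comm]; exact h.2⟩
  loopless := by
    constructor
    intro U h
    exact h.1 rfl

/-- The Kneser graph `K(n,k)`: vertices are the `k`-element subsets of `{1,...,n}`,
two vertices adjacent iff the corresponding subsets are disjoint. -/
def kneserGraph (n k : ℕ) : SimpleGraph {s : Finset (Fin n) // s.card = k} where
  Adj U W := U ≠ W ∧ Disjoint U.1 W.1
  symm := by
    constructor
    intro U W h
    exact ⟨h.1.symm, h.2.symm⟩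
  loopless := by
    constructor
    intro U h
    exact h.1 rfl

/-- A set `S` of vertices is a resolving set for `G` if every pair of distinct
vertices is resolved by some vertex of `S`, i.e. is at different distances from it. -/
def resolvingSet {V : Type*} (G : SimpleGraph V) (S : Set V) : Prop :=
  ∀ u v : V, u ≠ v → ∃ x ∈ S, G.dist u x ≠ G.dist v x

/-- The metric dimension `β(G)`: the minimum cardinality of a resolving set for `G`. -/
noncomputable def metricDim {V : Type*} (G : SimpleGraph V) : ℕ :=
  sInf {m | ∃ S : Finset V, resolvingSet G ↑S ∧ S.card = m}

/-! In the Odd graph `K(2k+1, k)` the distance between `U` and `W` is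
`min (2 (k - |U ∩ W|)) (2 |U ∩ W| + 1)`, an injective function of `|U ∩ W|`; so a block resolves
`u ≠ v` as soon as it meets them in different numbers of points. If every block `B_i` met `u`
and `v` equally, it would also meet `A = u \ v` and `C = v \ u` (both of size `t ≥ 1`) equally,
and counting incidences would give `∑ |A ∩ B_i|² = t (r + (t - 1) λ)` as well as
`∑ |A ∩ B_i| |C ∩ B_i| = t² λ`, forcing `r = λ` for the number `r` of blocks through a point.
But `r (k - 1) = λ (n - 1)` gives `r = 2m - 1 > m - 1 = λ` in a Hadamard design. -/

open Finset SimpleGraph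

section Kneser

variable {n k : ℕ}

lemma kneserGraph_adj_iff (hk : 0 < k) {U W : {s : Finset (Fin n) // #s = k}} :
    (kneserGraph n k).Adj U W ↔ Disjoint U.1 W.1 := by
  refine ⟨And.right, fun h => ⟨?_, h⟩⟩
  rintro rfl
  exact (card_pos.mp (by rw [U.2]; exact hk)).ne_empty (disjoint_self.mp h)

lemma kneserGraph_exists_adj_between (hk : 0 < k) (U : {s : Finset (Fin n) // #s = k})
    {T R : Finset (Fin n)} (hTR : T ⊆ R) (hUR : Disjoint U.1 R) (hT : #T ≤ k) (hR : k ≤ #R) :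
    ∃ X, (kneserGraph n k).Adj U X ∧ T ⊆ X.1 ∧ X.1 ⊆ R := by
  obtain ⟨X, hTX, hXR, hX⟩ := exists_subsuperset_card_eq hTR hT hR
  exact ⟨⟨X, hX⟩, (kneserGraph_adj_iff hk).2 (hUR.mono_right hXR), hTX, hXR⟩

lemma kneserGraph_adj_card_inter (hn : n = 2 * k + 1) {U U' : {s : Finset (Fin n) // #s = k}}
    (h : (kneserGraph n k).Adj U U') (W : {s : Finset (Fin n) // #s = k}) :
    k - 1 ≤ #(U.1 ∩ W.1) + #(U'.1 ∩ W.1) ∧ #(U.1 ∩ W.1) + #(U'.1 ∩ W.1) ≤ k := by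
  -- `U ∪ U'` misses exactly one of the `2k + 1` points
  have hd : Disjoint U.1 U'.1 := h.2
  have hsum : #(U.1 ∩ W.1) + #(U'.1 ∩ W.1) = #((U.1 ∪ U'.1) ∩ W.1) := by
    rw [union_inter_distrib_right,
      card_union_of_disjoint (hd.mono inter_subset_left inter_subset_left)]
  have hunion := card_union_add_card_inter (U.1 ∪ U'.1) W.1
  have huniv := card_le_univ (U.1 ∪ U'.1 ∪ W.1)
  have hW := card_le_card (inter_subset_right : (U.1 ∪ U'.1) ∩ W.1 ⊆ W.1)
  rw [card_union_of_disjoint hd, U.2, U'.2, W.2] at hunion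
  rw [Fintype.card_fin] at huniv
  rw [W.2] at hW
  omega

lemma kneserGraph_min_le_walk_length (hn : n = 2 * k + 1) {U W : {s : Finset (Fin n) // #s = k}}
    (p : (kneserGraph n k).Walk U W) :
    min (2 * (k - #(U.1 ∩ W.1))) (2 * #(U.1 ∩ W.1) + 1) ≤ p.length := by
  induction p with
  | @nil V => simp [V.2]
  | @cons U U' W h p ih =>
    have hstep := kneserGraph_adj_card_inter hn h W
    have hle := (card_le_card (inter_subset_left : U'.1 ∩ W.1 ⊆ U'.1)).trans_eq U'.2
    rw [Walk.length_cons]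
    omega

lemma kneserGraph_exists_two_step (hn : n = 2 * k + 1) {U W : {s : Finset (Fin n) // #s = k}}
    (h : #(U.1 ∩ W.1) < k) :
    ∃ X U₂, (kneserGraph n k).Adj U X ∧ (kneserGraph n k).Adj X U₂ ∧
      #(U.1 ∩ W.1) < #(U₂.1 ∩ W.1) := by
  have hk : 0 < k := by omega
  obtain ⟨b, hb⟩ : (W.1 \ U.1).Nonempty := by
    rw [← card_pos, card_sdiff, W.2]; omega
  rw [mem_sdiff] at hb
  -- `X` is the complement of `insert b U`; `U₂` is a neighbour of `X` containing `insert b (U ∩ W)`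
  obtain ⟨X, hUX, -, hX⟩ := kneserGraph_exists_adj_between hk U (empty_subset _)
    (disjoint_sdiff.mono_left (subset_insert b U.1)) (by simp)
    (by rw [card_univ_sdiff, card_insert_of_notMem hb.2, U.2, Fintype.card_fin]; omega)
  have hT : insert b (U.1 ∩ W.1) ⊆ univ \ X.1 := by
    refine subset_sdiff.2 ⟨subset_univ _, ?_⟩
    exact (disjoint_sdiff.mono_left (insert_subset_insert b inter_subset_left)).mono_right hX
  have hTcard : #(insert b (U.1 ∩ W.1)) = #(U.1 ∩ W.1) + 1 :=
    card_insert_of_notMem fun hbUW => hb.2 (mem_inter.1 hbUW).1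
  obtain ⟨U₂, hXU₂, hTU₂, -⟩ := kneserGraph_exists_adj_between hk X hT disjoint_sdiff (by omega)
    (by rw [card_univ_sdiff, X.2, Fintype.card_fin]; omega)
  refine ⟨X, U₂, hUX, hXU₂, ?_⟩
  calc #(U.1 ∩ W.1) < #(insert b (U.1 ∩ W.1)) := by omega
    _ ≤ #(U₂.1 ∩ W.1) :=
      card_le_card (subset_inter hTU₂ (insert_subset hb.1 inter_subset_right))

lemma kneserGraph_exists_walk_length_le_two_mul_sub (hn : n = 2 * k + 1)
    (U W : {s : Finset (Fin n) // #s = k}) :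
    ∃ p : (kneserGraph n k).Walk U W, p.length ≤ 2 * (k - #(U.1 ∩ W.1)) := by
  induction hd : k - #(U.1 ∩ W.1) using Nat.strong_induction_on generalizing U with
  | _ d ih =>
    by_cases h : #(U.1 ∩ W.1) < k
    · obtain ⟨X, U₂, hUX, hXU₂, hlt⟩ := kneserGraph_exists_two_step hn h
      obtain ⟨p, hp⟩ := ih _ (by omega) U₂ rfl
      exact ⟨.cons hUX (.cons hXU₂ p), by simp only [Walk.length_cons]; omega⟩
    · have hUW : U.1 ⊆ W.1 := inter_eq_left.1 <|
        eq_of_subset_of_card_le inter_subset_left (by rw [U.2]; omega)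
      obtain rfl : U = W := Subtype.ext (eq_of_subset_of_card_le hUW (by rw [U.2, W.2]))
      exact ⟨.nil, by simp⟩

lemma kneserGraph_exists_walk_length_le_two_mul_add_one (hn : n = 2 * k + 1) (hk : 0 < k)
    (U W : {s : Finset (Fin n) // #s = k}) :
    ∃ p : (kneserGraph n k).Walk U W, p.length ≤ 2 * #(U.1 ∩ W.1) + 1 := by
  obtain ⟨U', hUU', hWU', -⟩ := kneserGraph_exists_adj_between hk U
    (sdiff_subset_sdiff (subset_univ W.1) subset_rfl) disjoint_sdiff
    (by rw [card_sdiff, W.2]; omega)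
    (by rw [card_univ_sdiff, U.2, Fintype.card_fin]; omega)
  obtain ⟨p, hp⟩ := kneserGraph_exists_walk_length_le_two_mul_sub hn U' W
  have : #(W.1 \ U.1) ≤ #(U'.1 ∩ W.1) := card_le_card (subset_inter hWU' sdiff_subset)
  rw [card_sdiff, W.2] at this
  exact ⟨.cons hUU' p, by rw [Walk.length_cons]; omega⟩

theorem kneserGraph_dist (hn : n = 2 * k + 1) (U W : {s : Finset (Fin n) // #s = k}) :
    (kneserGraph n k).dist U W = min (2 * (k - #(U.1 ∩ W.1))) (2 * #(U.1 ∩ W.1) + 1) := by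
  obtain ⟨p, hp⟩ := kneserGraph_exists_walk_length_le_two_mul_sub hn U W
  refine le_antisymm (le_min ((dist_le p).trans hp) ?_) ?_
  · rcases Nat.eq_zero_or_pos k with rfl | hk
    · exact (dist_le p).trans (by omega)
    · obtain ⟨q, hq⟩ := kneserGraph_exists_walk_length_le_two_mul_add_one hn hk U W
      exact (dist_le q).trans hq
  · obtain ⟨q, hq⟩ := Reachable.exists_walk_length_eq_dist ⟨p⟩
    exact hq ▸ kneserGraph_min_le_walk_length hn q

lemma kneserGraph_dist_ne_of_card_inter_ne (hn : n = 2 * k + 1)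
    {U V W : {s : Finset (Fin n) // #s = k}} (h : #(U.1 ∩ W.1) ≠ #(V.1 ∩ W.1)) :
    (kneserGraph n k).dist U W ≠ (kneserGraph n k).dist V W := by
  have hU := (card_le_card (inter_subset_left : U.1 ∩ W.1 ⊆ U.1)).trans_eq U.2
  have hV := (card_le_card (inter_subset_left : V.1 ∩ W.1 ⊆ V.1)).trans_eq V.2
  rw [kneserGraph_dist hn, kneserGraph_dist hn]
  omega

end Kneser

section Design

variable {α ι : Type*} [Fintype ι] [DecidableEq α] (B : ι → Finset α)

lemma sum_card_inter_mul_card_inter (A C : Finset α) :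
    ∑ i, #(A ∩ B i) * #(C ∩ B i) = ∑ p ∈ A, ∑ q ∈ C, #{i | p ∈ B i ∧ q ∈ B i} := by
  simp only [← filter_mem_eq_inter, card_filter, sum_mul_sum, ite_zero_mul_ite_zero, mul_one]
  rw [sum_comm]
  exact sum_congr rfl fun p _ => sum_comm

variable {B} {l : ℕ} (hpair : ∀ p q, p ≠ q → #{i | p ∈ B i ∧ q ∈ B i} = l)
include hpair

lemma card_filter_mem_mul_sub_one [Fintype α] {k : ℕ} (hcard : ∀ i, #(B i) = k) (p : α) :
    #{i | p ∈ B i} * (k - 1) = l * (Fintype.card α - 1) := by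
  have hterm : ∀ i, #({p} ∩ B i) * #(univ.erase p ∩ B i) = if p ∈ B i then k - 1 else 0 := by
    intro i
    split_ifs with h
    · rw [singleton_inter_of_mem h, card_singleton, one_mul, erase_inter, univ_inter,
        card_erase_of_mem h, hcard]
    · rw [singleton_inter_of_notMem h, card_empty, zero_mul]
  have hcount := sum_card_inter_mul_card_inter B {p} (univ.erase p)
  rw [sum_congr rfl fun i _ => hterm i, ← sum_filter, sum_const, smul_eq_mul, sum_singleton,
    sum_congr rfl fun q hq => hpair p q (ne_of_mem_erase hq).symm, sum_const, smul_eq_mul,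
    card_erase_of_mem (mem_univ p), card_univ] at hcount
  rw [hcount, mul_comm]

lemma sum_card_inter_mul_card_inter_of_disjoint {A C : Finset α} (h : Disjoint A C) :
    ∑ i, #(A ∩ B i) * #(C ∩ B i) = #A * #C * l := by
  rw [sum_card_inter_mul_card_inter,
    sum_congr rfl fun p hp => sum_congr rfl fun q hq => hpair p q (h.forall_ne_finset hp hq)]
  simp only [sum_const, smul_eq_mul, mul_assoc]

variable {r : ℕ} (hrep : ∀ p, #{i | p ∈ B i} = r)
include hrep

lemma sum_card_inter_mul_self (A : Finset α) :
    ∑ i, #(A ∩ B i) * #(A ∩ B i) = #A * (r + (#A - 1) * l) := by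
  have hrow : ∀ p ∈ A, ∑ q ∈ A, #{i | p ∈ B i ∧ q ∈ B i} = r + (#A - 1) * l := by
    intro p hp
    rw [← add_sum_erase A _ hp,
      sum_congr rfl fun q hq => hpair p q (ne_of_mem_erase hq).symm, sum_const, smul_eq_mul,
      card_erase_of_mem hp]
    simp only [and_self, hrep]
  rw [sum_card_inter_mul_card_inter, sum_congr rfl hrow, sum_const, smul_eq_mul]

lemma exists_card_inter_ne (hlt : l < r) {u v : Finset α} (huv : #u = #v) (hne : u ≠ v) :
    ∃ i, #(u ∩ B i) ≠ #(v ∩ B i) := by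
  by_contra! h
  have hsplit : ∀ s t i, #(s ∩ B i) = #(s ∩ t ∩ B i) + #((s \ t) ∩ B i) := fun s t i => by
    rw [← card_inter_add_card_sdiff (s ∩ B i) t, inter_right_comm, sdiff_inter_right_comm]
  have hsdiff : ∀ i, #((u \ v) ∩ B i) = #((v \ u) ∩ B i) := fun i => by
    have := h i
    rw [hsplit u v, hsplit v u, inter_comm v u] at this
    omega
  set t := #(u \ v) with ht
  have htv : #(v \ u) = t := by
    rw [ht, card_sdiff, card_sdiff, inter_comm, huv]
  have htpos : 0 < t := by
    by_contra! ht0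
    have huv' : u ⊆ v := sdiff_eq_empty_iff_subset.1 (card_eq_zero.1 (by omega))
    exact hne (eq_of_subset_of_card_le huv' huv.ge)
  have hcount := sum_card_inter_mul_self hpair hrep (u \ v)
  rw [sum_congr rfl fun i _ => congrArg (#((u \ v) ∩ B i) * ·) (hsdiff i),
    sum_card_inter_mul_card_inter_of_disjoint hpair disjoint_sdiff_sdiff, htv, ← ht,
    mul_assoc] at hcount
  have hrow := Nat.eq_of_mul_eq_mul_left htpos hcount
  rw [Nat.sub_one_mul] at hrow
  have := Nat.le_mul_of_pos_left l htpos
  omega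

end Design

/-- The blocks of a Hadamard design with parameters `(4m−1, 2m−1, m−1)` form a
resolving set for the Odd graph `O_{2m} = K(4m−1, 2m−1)`. -/
theorem hadamard_design_resolving_odd (m : ℕ) (hm : 2 ≤ m)
    (B : Fin (4 * m - 1) → Finset (Fin (4 * m - 1)))
    (hcard : ∀ i, (B i).card = 2 * m - 1)
    (hpair : ∀ p q : Fin (4 * m - 1), p ≠ q →
      (Finset.univ.filter (fun i => p ∈ B i ∧ q ∈ B i)).card = m - 1) :
    resolvingSet (kneserGraph (4 * m - 1) (2 * m - 1)) {X | ∃ i, X.1 = B i} := by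
  have hrep : ∀ p, #{i | p ∈ B i} = 2 * m - 1 := fun p => by
    have h := card_filter_mem_mul_sub_one hpair hcard p
    rw [Fintype.card_fin, show 4 * m - 1 - 1 = 2 * (2 * m - 1) by omega,
      show 2 * m - 1 - 1 = 2 * (m - 1) by omega] at h
    exact Nat.eq_of_mul_eq_mul_right (show 0 < 2 * (m - 1) by omega) (h.trans (by ring))
  intro u v huv
  obtain ⟨i, hi⟩ := exists_card_inter_ne hpair hrep (by omega) (u.2.trans v.2.symm)
    (Subtype.coe_injective.ne huv)
  exact ⟨⟨B i, hcard i⟩, ⟨i, rfl⟩, kneserGraph_dist_ne_of_card_inter_ne (by omega) hi⟩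
end

section
/- Let F be a finite field with q = |F| ≥ 3 elements. The set of all affine lines of the plane F² — i.e., all sets of the form {p + t·d : t ∈ F} with p ∈ F² and d ∈ F² \ {0}, each of which is a q-element subset of the q²-element set F² — is a resolving set for the Kneser graph K(q², q) on the point set F². Consequently β(K(q²,q)) ≤ q² + q. -/
/-- The Kneser graph `K(n,k)` on a ground set `X`: vertices are the `k`-element
subsets of `X`, two vertices adjacent iff the corresponding subsets are disjoint. -/
def kneserGraphOn (X : Type*) [DecidableEq X] (k : ℕ) :
    SimpleGraph {s : Finset X // s.card = k} where
  Adj U W := U ≠ W ∧ Disjoint U.1 W.1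
  symm := by
    constructor
    intro U W h
    exact ⟨h.1.symm, h.2.symm⟩
  loopless := by
    constructor
    intro U h
    exact h.1 rfl

/-!
Given distinct `q`-sets `U ≠ V` of points of `F²`, pick `x ∈ V \ U`. The `q + 1` lines
through `x` meet only in `x`, so the `q` points of `U` miss at least one of them; that line is
adjacent to `U` in the Kneser graph but not to `V`, hence resolves the pair. Every line through
a point is one of the `q² + q` lines `y = m x + c` or `x = c`.
-/

open Finset

section Resolving

variable {V : Type*} (G : SimpleGraph V)

lemma resolvingSet_mono {S T : Set V} (hST : S ⊆ T) (hS : resolvingSet G S) :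
    resolvingSet G T := fun u v huv =>
  let ⟨x, hxS, hx⟩ := hS u v huv
  ⟨x, hST hxS, hx⟩

lemma resolvingSet_of_exists_adj_not_adj {S : Set V}
    (h : ∀ u v, u ≠ v → ∃ x ∈ S, G.Adj u x ∧ ¬ G.Adj v x) : resolvingSet G S := by
  intro u v huv
  obtain ⟨x, hxS, hux, hvx⟩ := h u v huv
  refine ⟨x, hxS, fun hdist => hvx ?_⟩
  rw [← SimpleGraph.dist_eq_one_iff_adj] at hux ⊢
  rwa [← hdist]

lemma metricDim_le_card {S : Finset V} (hS : resolvingSet G S) : metricDim G ≤ #S :=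
  Nat.sInf_le ⟨S, hS, rfl⟩

end Resolving

lemma kneserGraphOn_resolvingSet {X : Type*} [DecidableEq X] {k : ℕ}
    {S : Set {s : Finset X // #s = k}}
    (h : ∀ U : Finset X, #U = k → ∀ x ∉ U, ∃ W ∈ S, x ∈ W.1 ∧ Disjoint U W.1) :
    resolvingSet (kneserGraphOn X k) S := by
  refine resolvingSet_of_exists_adj_not_adj _ fun u v huv => ?_
  obtain ⟨x, hxv, hxu⟩ : ∃ x ∈ v.1, x ∉ u.1 := not_subset.mp fun hvu =>
    huv (Subtype.ext (eq_of_subset_of_card_le hvu (by rw [u.2, v.2])).symm)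
  obtain ⟨W, hWS, hxW, hUW⟩ := h u.1 u.2 x hxu
  refine ⟨W, hWS, ⟨?_, hUW⟩, fun hvW => disjoint_left.mp hvW.2 hxv hxW⟩
  rintro rfl
  exact hxu hxW

section AffinePlane

variable {F : Type*} [Field F]

/-- The direction of slope `m`, with `none` standing for the vertical direction. -/
def slopeDir : Option F → F × F
  | none => (0, 1)
  | some m => (1, m)

lemma slopeDir_ne_zero (m : Option F) : slopeDir m ≠ 0 := by
  cases m <;> simp [slopeDir, Prod.ext_iff]

variable [DecidableEq F]

def directionSlope (d : F × F) : Option F :=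
  if d.1 = 0 then none else some (d.2 / d.1)

lemma directionSlope_smul_slopeDir {t : F} (ht : t ≠ 0) (m : Option F) :
    directionSlope (t • slopeDir m) = m := by
  cases m <;> simp [directionSlope, slopeDir, ht]

variable [Fintype F]

def affineLine (p d : F × F) : Finset (F × F) :=
  univ.image fun t : F => p + t • d

lemma card_affineLine (p : F × F) {d : F × F} (hd : d ≠ 0) :
    #(affineLine p d) = Fintype.card F := by
  refine (card_image_of_injective _ fun s t hst => ?_).trans card_univ
  exact smul_left_injective F hd (add_left_cancel hst)

lemma mem_affineLine_self (p d : F × F) : p ∈ affineLine p d :=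
  mem_image.mpr ⟨0, mem_univ _, by simp⟩

lemma affineLine_sub_smul (p d : F × F) (s : F) : affineLine (p - s • d) d = affineLine p d := by
  ext y
  simp only [affineLine, mem_image, mem_univ, true_and]
  constructor
  · rintro ⟨t, rfl⟩
    exact ⟨t - s, by rw [sub_smul]; abel⟩
  · rintro ⟨t, rfl⟩
    exact ⟨s + t, by rw [add_smul]; abel⟩

/-- Pigeonhole over the `q + 1` lines through `x`: a point `u ≠ x` lies only on the one of slope
`directionSlope (u - x)`. -/
lemma exists_disjoint_affineLine_slopeDir {U : Finset (F × F)} (hU : #U ≤ Fintype.card F)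
    {x : F × F} (hx : x ∉ U) : ∃ m, Disjoint (affineLine x (slopeDir m)) U := by
  have hslopes : #(U.image fun u => directionSlope (u - x)) < #(univ : Finset (Option F)) := by
    rw [card_univ, Fintype.card_option]
    exact card_image_le.trans_lt (Nat.lt_succ_of_le hU)
  obtain ⟨m, -, hm⟩ := exists_mem_notMem_of_card_lt_card hslopes
  refine ⟨m, disjoint_left.mpr fun y hy hyU => hm ?_⟩
  obtain ⟨t, -, rfl⟩ := mem_image.mp hy
  have ht : t ≠ 0 := by
    rintro rfl
    exact hx (by simpa using hyU)
  exact mem_image.mpr ⟨_, hyU, by rw [add_sub_cancel_left, directionSlope_smul_slopeDir ht]⟩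

/-- The line `y = m x + c`, or the vertical line `x = c` when `m = none`. -/
def slopeInterceptLine (m : Option F) (c : F) : Finset (F × F) :=
  affineLine (match m with | none => (c, 0) | some _ => (0, c)) (slopeDir m)

lemma exists_slopeInterceptLine_eq (x : F × F) (m : Option F) :
    ∃ c, slopeInterceptLine m c = affineLine x (slopeDir m) := by
  cases m with
  | none =>
    refine ⟨x.1, ?_⟩
    rw [slopeInterceptLine, ← affineLine_sub_smul x _ x.2]
    congr 1
    ext <;> simp [slopeDir]
  | some m =>
    refine ⟨x.2 - x.1 * m, ?_⟩
    rw [slopeInterceptLine, ← affineLine_sub_smul x _ x.1]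
    congr 1
    ext <;> simp [slopeDir, mul_comm]

end AffinePlane

theorem affine_plane_resolving_kneser_general
    (F : Type*) [Field F] [Fintype F] [DecidableEq F] :
    resolvingSet (kneserGraphOn (F × F) (Fintype.card F))
      {X | ∃ p d : F × F, d ≠ 0 ∧
        X.1 = Finset.image (fun t : F => p + t • d) Finset.univ} ∧
    metricDim (kneserGraphOn (F × F) (Fintype.card F)) ≤
      Fintype.card F ^ 2 + Fintype.card F := by
  let lines : Finset {s : Finset (F × F) // #s = Fintype.card F} :=
    univ.image fun i : Option F × F =>
      ⟨slopeInterceptLine i.1 i.2, card_affineLine _ (slopeDir_ne_zero i.1)⟩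
  have hres : resolvingSet (kneserGraphOn (F × F) (Fintype.card F)) lines := by
    refine kneserGraphOn_resolvingSet fun U hU x hx => ?_
    obtain ⟨m, hm⟩ := exists_disjoint_affineLine_slopeDir hU.le hx
    obtain ⟨c, hc⟩ := exists_slopeInterceptLine_eq x m
    refine ⟨_, mem_coe.mpr (mem_image_of_mem _ (mem_univ (m, c))), ?_, ?_⟩
    · simpa [hc] using mem_affineLine_self x (slopeDir m)
    · simpa [hc] using hm.symm
  refine ⟨resolvingSet_mono _ ?_ hres, ?_⟩
  · intro X hX
    obtain ⟨i, -, rfl⟩ := mem_image.mp (mem_coe.mp hX)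
    exact ⟨_, _, slopeDir_ne_zero i.1, rfl⟩
  · calc metricDim _ ≤ #lines := metricDim_le_card _ hres
      _ ≤ Fintype.card (Option F × F) := card_image_le.trans card_univ.le
      _ = Fintype.card F ^ 2 + Fintype.card F := by
        rw [Fintype.card_prod, Fintype.card_option]
        ring

/-- For a finite field `F` with `q = |F| ≥ 3` elements, the set of all affine lines of
the plane `F²` is a resolving set for the Kneser graph `K(q², q)` on the point set
`F²`; consequently `β(K(q²,q)) ≤ q² + q`. -/
theorem affine_plane_resolving_kneser
    (F : Type*) [Field F] [Fintype F] [DecidableEq F]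
    (hq : 3 ≤ Fintype.card F) :
    resolvingSet (kneserGraphOn (F × F) (Fintype.card F))
      {X | ∃ p d : F × F, d ≠ 0 ∧
        X.1 = Finset.image (fun t : F => p + t • d) Finset.univ} ∧
    metricDim (kneserGraphOn (F × F) (Fintype.card F)) ≤
      Fintype.card F ^ 2 + Fintype.card F :=
  affine_plane_resolving_kneser_general F
end
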